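/- arXiv:0901.0858 — 2 statements merged into one kernel-verified Lean document; each statement's English description precedes it below -/
import Mathlib

section
/- Let G be a graph with weight function w : V(G) → ℝ. Then G is w-well-covered if and only if for every generating subgraph B of G with bipartition (B_X, B_Y), one has w(B_X) = w(B_Y). -/
open SimpleGraph Set

variable {V : Type*} [Fintype V] [DecidableEq V]

/-- `N_i(S)`: vertices whose minimum distance to the set `S` equals `i`. -/
def NSet (G : SimpleGraph V) (i : ℕ) (S : Set V) : Set V :=
  {u | (⨅ s ∈ S, G.edist s u) = (i : ℕ∞)}

/-- `N_i(x)`: vertices at distance exactly `i` from `x`. -/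
def Nv (G : SimpleGraph V) (i : ℕ) (x : V) : Set V := {u | G.edist x u = (i : ℕ∞)}

/-- `S` is an independent set of `G`. -/
def IsIndep (G : SimpleGraph V) (S : Set V) : Prop :=
  S.Pairwise fun u v => ¬ G.Adj u v

/-- `A` dominates `T`. -/
def Dominates (G : SimpleGraph V) (A T : Set V) : Prop :=
  T ⊆ A ∪ {u | ∃ a ∈ A, G.Adj a u}

/-- `S` is a maximal independent set of `G`. -/
def IsMaxIndep (G : SimpleGraph V) (S : Set V) : Prop :=
  IsIndep G S ∧ ∀ T, IsIndep G T → S ⊆ T → T = S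

/-- The induced subgraph on `X ∪ Y` is complete bipartite with parts `X`, `Y`. -/
def IsCompBipartite (G : SimpleGraph V) (X Y : Set V) : Prop :=
  X.Nonempty ∧ Y.Nonempty ∧ Disjoint X Y ∧ IsIndep G X ∧ IsIndep G Y ∧
    ∀ x ∈ X, ∀ y ∈ Y, G.Adj x y

/-- `B = (X, Y)` is a generating subgraph of `G`. -/
def Generating (G : SimpleGraph V) (X Y : Set V) : Prop :=
  IsCompBipartite G X Y ∧ ∃ S : Set V, IsIndep G S ∧ Disjoint S (X ∪ Y) ∧
    IsMaxIndep G (S ∪ X) ∧ IsMaxIndep G (S ∪ Y)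

/-- `G` contains a (not necessarily induced) cycle on `k` vertices. -/
def HasCycle (G : SimpleGraph V) (k : ℕ) : Prop :=
  ∃ f : ZMod k → V, Function.Injective f ∧ ∀ i, G.Adj (f i) (f (i + 1))

/-- Weight of a set of vertices. -/
noncomputable def wt (w : V → ℝ) (S : Set V) : ℝ := ∑ x ∈ S.toFinite.toFinset, w x

/-- `G` is `w`-well-covered. -/
def WWellCovered (G : SimpleGraph V) (w : V → ℝ) : Prop :=
  ∀ S T : Set V, IsMaxIndep G S → IsMaxIndep G T → wt w S = wt w T

omit [DecidableEq V] in
theorem wt_union (w : V → ℝ) {A B : Set V} (h : Disjoint A B) :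
    wt w (A ∪ B) = wt w A + wt w B := by
  classical
  rw [wt, wt, wt, ← Finset.sum_union (by simpa [Finset.disjoint_left, Set.disjoint_left] using h)]
  congr 1
  ext
  simp

omit [DecidableEq V] in
theorem wt_eq_wt_inter_add_wt_sdiff (w : V → ℝ) (S T : Set V) :
    wt w S = wt w (S ∩ T) + wt w (S \ T) := by
  rw [← wt_union w (disjoint_sdiff_inter.symm), inter_union_sdiff]

section Independence

omit [Fintype V] [DecidableEq V]

variable {G : SimpleGraph V}

theorem IsIndep.mono {S T : Set V} (hT : IsIndep G T) (hST : S ⊆ T) : IsIndep G S :=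
  Set.Pairwise.mono hST hT

theorem IsMaxIndep.eq_of_subset {S T : Set V} (hS : IsMaxIndep G S) (hT : IsIndep G T)
    (hST : S ⊆ T) : S = T :=
  (hS.2 T hT hST).symm

theorem IsIndep.insert_insert_inter {S T : Set V} {x y : V} (hS : IsIndep G S)
    (hT : IsIndep G T) (hx : x ∈ S) (hy : y ∈ T) (hxy : ¬G.Adj x y) :
    IsIndep G (insert x (insert y (S ∩ T))) := by
  have : Std.Symm fun u v => ¬G.Adj u v := ⟨fun _ _ h h' => h h'.symm⟩
  simp only [IsIndep, pairwise_insert_of_symm]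
  refine ⟨⟨hS.mono inter_subset_left, fun b hb hyb => hT hy hb.2 hyb⟩, ?_⟩
  rintro b (rfl | hb) hxb
  · exact hxy
  · exact hS hx hb.1 hxb

theorem exists_isMaxIndep_superset [Finite V] {I : Set V} (hI : IsIndep G I) :
    ∃ S, I ⊆ S ∧ IsMaxIndep G S := by
  obtain ⟨S, hIS, hS⟩ := (toFinite {T : Set V | IsIndep G T}).exists_le_maximal hI
  exact ⟨S, hIS, hS.prop, fun T hT hST => (hS.eq_of_le hT hST).symm⟩

theorem generating_sdiff {S T : Set V} (hS : IsMaxIndep G S) (hT : IsMaxIndep G T) (hST : S ≠ T)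
    (hadj : ∀ x ∈ S \ T, ∀ y ∈ T \ S, G.Adj x y) : Generating G (S \ T) (T \ S) := by
  refine ⟨⟨sdiff_nonempty.2 fun h => hST (hS.eq_of_subset hT.1 h),
    sdiff_nonempty.2 fun h => hST (hT.eq_of_subset hS.1 h).symm, disjoint_sdiff_sdiff,
    hS.1.mono sdiff_subset, hT.1.mono sdiff_subset, hadj⟩,
    S ∩ T, hS.1.mono inter_subset_left, ?_, ?_, ?_⟩
  · exact disjoint_union_right.2
      ⟨disjoint_sdiff_inter.symm, disjoint_sdiff_self_right.mono_left inter_subset_left⟩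
  · rwa [inter_union_sdiff]
  · rwa [inter_comm, inter_union_sdiff]

end Independence

/- Induction on how little `S` and `T` share. If all of `S \ T` is adjacent to all of `T \ S`,
these two sets form a generating subgraph with witness `S ∩ T`. Otherwise a maximal independent
`U ⊇ (S ∩ T) ∪ {x, y}`, for nonadjacent `x ∈ S \ T` and `y ∈ T \ S`, shares more with each of
`S` and `T` than they share with each other. -/
omit [DecidableEq V] in
theorem wt_eq_of_isMaxIndep {G : SimpleGraph V} {w : V → ℝ}
    (hgen : ∀ X Y, Generating G X Y → wt w X = wt w Y) {S T : Set V}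
    (hS : IsMaxIndep G S) (hT : IsMaxIndep G T) : wt w S = wt w T := by
  by_cases hST : S = T
  · rw [hST]
  by_cases hadj : ∀ x ∈ S \ T, ∀ y ∈ T \ S, G.Adj x y
  · rw [wt_eq_wt_inter_add_wt_sdiff w S T, wt_eq_wt_inter_add_wt_sdiff w T S, inter_comm T S,
      hgen _ _ (generating_sdiff hS hT hST hadj)]
  push Not at hadj
  obtain ⟨x, hx, y, hy, hxy⟩ := hadj
  obtain ⟨U, hxyU, hU⟩ := exists_isMaxIndep_superset (hS.1.insert_insert_inter hT.1 hx.1 hy.1 hxy)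
  have hU_inter : S ∩ T ⊆ U := fun a ha => hxyU (by simp [ha])
  have hSU : S ∩ T ⊂ S ∩ U := (ssubset_iff_of_subset (subset_inter inter_subset_left hU_inter)).2
    ⟨x, ⟨hx.1, hxyU (by simp)⟩, fun h => hx.2 h.2⟩
  have hUT : S ∩ T ⊂ U ∩ T := (ssubset_iff_of_subset (subset_inter hU_inter inter_subset_right)).2
    ⟨y, ⟨hxyU (by simp), hy.1⟩, fun h => hy.2 h.1⟩
  exact (wt_eq_of_isMaxIndep hgen hS hU).trans (wt_eq_of_isMaxIndep hgen hU hT)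
termination_by (S ∩ T)ᶜ.ncard
decreasing_by
  all_goals exact ncard_lt_ncard (compl_lt_compl_iff_lt.2 ‹_›)

theorem wWellCovered_iff_generating_constraints (G : SimpleGraph V) (w : V → ℝ) :
    WWellCovered G w ↔ ∀ X Y : Set V, Generating G X Y → wt w X = wt w Y := by
  refine ⟨fun hwc X Y ⟨_, S, _, hdisj, hX, hY⟩ => ?_,
    fun hgen S T hS hT => wt_eq_of_isMaxIndep hgen hS hT⟩
  have h := hwc _ _ hX hY
  rwa [wt_union w (hdisj.mono_right subset_union_left),
    wt_union w (hdisj.mono_right subset_union_right), add_left_cancel_iff] at h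
end

section
/- Let G be a graph containing neither C₄, C₅, C₆ nor C₇ as subgraphs, let v be a vertex, and for each neighbor y of v let M_2(y) = N_2(y) ∩ N_3(v). Suppose y₁ ≠ y₂ are neighbors of v, a₁ ∈ M_2(y₁), and a₂ ∈ M_2(y₂). Then a₁ and a₂ are not adjacent. Consequently, if for each y in a set D ⊆ N_1(v) an independent set S_y ⊆ M_2(y) is chosen, then ⋃_{y∈D} S_y is independent. -/
open SimpleGraph Set

variable {V : Type*} [Fintype V] [DecidableEq V]

/-!
If `a₁ ∼ a₂`, pick `b₁, b₂` with `yᵢ ∼ bᵢ ∼ aᵢ`. Both `bᵢ` lie at distance exactly `2` from `v`,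
so if `b₁ = b₂` then `v y₁ b₁ y₂` is a `4`-cycle, and otherwise `v y₁ b₁ a₁ a₂ b₂ y₂` is a
`7`-cycle: its vertices sit at distances `0, 1, 2, 3, 3, 2, 1` from `v`, so only the three pairs
at equal distance could coincide, and these are distinct by hypothesis.
-/

section

variable {W : Type*} {G : SimpleGraph W} {v x y : W}

lemma edist_le_edist_add_one_of_adj (h : G.Adj x y) : G.edist v y ≤ G.edist v x + 1 := by
  calc G.edist v y ≤ G.edist v x + G.edist x y := SimpleGraph.edist_triangle
    _ = G.edist v x + 1 := by rw [edist_eq_one_iff_adj.mpr h]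

lemma exists_adj_adj_of_edist_eq_two (h : G.edist x y = 2) : ∃ b, G.Adj x b ∧ G.Adj b y := by
  obtain ⟨p, hp⟩ := exists_walk_of_edist_eq_coe h
  match p, hp with
  | .cons h₁ (.cons h₂ .nil), _ => exact ⟨_, h₁, h₂⟩

lemma edist_eq_two_of_adj_of_adj {b a : W} (hy : G.Adj v y) (hb : G.Adj y b) (ha : G.Adj b a)
    (hva : G.edist v a = 3) : G.edist v b = 2 := by
  have upper : G.edist v b ≤ 2 := by
    calc G.edist v b ≤ G.edist v y + 1 := edist_le_edist_add_one_of_adj hb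
      _ = 2 := by rw [edist_eq_one_iff_adj.mpr hy]; rfl
  have lower : 3 ≤ G.edist v b + 1 := hva ▸ edist_le_edist_add_one_of_adj ha
  obtain ⟨n, hn⟩ := ENat.ne_top_iff_exists.mp (ne_top_of_le_ne_top (by decide) upper)
  rw [← hn] at upper lower ⊢
  norm_cast at upper lower ⊢
  omega

lemma hasCycle_four {a b c d : W}
    (hab : G.Adj a b) (hbc : G.Adj b c) (hcd : G.Adj c d) (hda : G.Adj d a)
    (hac : a ≠ c) (hbd : b ≠ d) : HasCycle G 4 := by
  refine ⟨![a, b, c, d], fun i j h => ?_, fun i => ?_⟩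
  · have := hab.ne; have := hbc.ne; have := hcd.ne; have := hda.ne
    fin_cases i <;> fin_cases j <;> simp at h <;>
      first | rfl | exact absurd h ‹_› | exact absurd h.symm ‹_›
  · fin_cases i
    exacts [hab, hbc, hcd, hda]

theorem not_adj_of_edist_eq_three (h4 : ¬ HasCycle G 4) (h7 : ¬ HasCycle G 7)
    {y₁ y₂ a₁ a₂ : W} (hy₁ : G.Adj v y₁) (hy₂ : G.Adj v y₂) (hy : y₁ ≠ y₂)
    (hya₁ : G.edist y₁ a₁ = 2) (hya₂ : G.edist y₂ a₂ = 2)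
    (hva₁ : G.edist v a₁ = 3) (hva₂ : G.edist v a₂ = 3) : ¬ G.Adj a₁ a₂ := by
  intro ha
  obtain ⟨b₁, hyb₁, hba₁⟩ := exists_adj_adj_of_edist_eq_two hya₁
  obtain ⟨b₂, hyb₂, hba₂⟩ := exists_adj_adj_of_edist_eq_two hya₂
  have hvb₁ := edist_eq_two_of_adj_of_adj hy₁ hyb₁ hba₁ hva₁
  have hvb₂ := edist_eq_two_of_adj_of_adj hy₂ hyb₂ hba₂ hva₂
  by_cases hb : b₁ = b₂
  · subst hb
    have hvb : v ≠ b₁ := ne_of_apply_ne (G.edist v) (by rw [edist_self, hvb₁]; decide)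
    exact h4 (hasCycle_four hy₁ hyb₁ hyb₂.symm hy₂.symm hvb hy)
  · set f : Fin 7 → W := ![v, y₁, b₁, a₁, a₂, b₂, y₂]
    have layer : ∀ i, G.edist v (f i) = ![0, 1, 2, 3, 3, 2, 1] i := by
      intro i
      fin_cases i
      exacts [edist_self, edist_eq_one_iff_adj.mpr hy₁, hvb₁, hva₁, hva₂, hvb₂,
        edist_eq_one_iff_adj.mpr hy₂]
    refine h7 ⟨f, fun i j h => ?_, fun i => ?_⟩
    · have hij := (layer i).symm.trans ((congrArg (G.edist v) h).trans (layer j))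
      have ha' : a₁ ≠ a₂ := ha.ne
      fin_cases i <;> fin_cases j <;> simp [f] at hij h <;>
        first | rfl | exact absurd h ‹_› | exact absurd h.symm ‹_›
    · fin_cases i
      exacts [hy₁, hyb₁, hba₁, ha, hba₂.symm, hyb₂.symm, hy₂.symm]

lemma isIndep_biUnion {ι : Type*} {D : Set ι} {S : ι → Set W}
    (hS : ∀ i ∈ D, IsIndep G (S i))
    (hcross : ∀ i ∈ D, ∀ j ∈ D, i ≠ j → ∀ a ∈ S i, ∀ b ∈ S j, ¬ G.Adj a b) :
    IsIndep G (⋃ i ∈ D, S i) := by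
  intro a ha b hb hab
  simp only [mem_iUnion] at ha hb
  obtain ⟨i, hi, hai⟩ := ha
  obtain ⟨j, hj, hbj⟩ := hb
  by_cases hij : i = j
  · subst hij
    exact hS i hi hai hbj hab
  · exact hcross i hi j hj hij a hai b hbj

end

theorem M2_union_indep_general (G : SimpleGraph V) (h4 : ¬ HasCycle G 4)
    (h7 : ¬ HasCycle G 7) (v : V) :
    (∀ y₁ y₂ a₁ a₂ : V, G.Adj v y₁ → G.Adj v y₂ → y₁ ≠ y₂ →
        a₁ ∈ Nv G 2 y₁ ∩ Nv G 3 v → a₂ ∈ Nv G 2 y₂ ∩ Nv G 3 v → ¬ G.Adj a₁ a₂) ∧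
    ∀ (D : Set V) (Sf : V → Set V), D ⊆ {y : V | G.Adj v y} →
      (∀ y ∈ D, Sf y ⊆ Nv G 2 y ∩ Nv G 3 v ∧ IsIndep G (Sf y)) →
      IsIndep G (⋃ y ∈ D, Sf y) := by
  have cross : ∀ y₁ y₂ a₁ a₂ : V, G.Adj v y₁ → G.Adj v y₂ → y₁ ≠ y₂ →
      a₁ ∈ Nv G 2 y₁ ∩ Nv G 3 v → a₂ ∈ Nv G 2 y₂ ∩ Nv G 3 v → ¬ G.Adj a₁ a₂ :=
    fun _ _ _ _ hy₁ hy₂ hy ha₁ ha₂ =>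
      not_adj_of_edist_eq_three h4 h7 hy₁ hy₂ hy ha₁.1 ha₂.1 ha₁.2 ha₂.2
  refine ⟨cross, fun D Sf hD hS => isIndep_biUnion (fun y hy => (hS y hy).2) ?_⟩
  exact fun y hy z hz hyz a ha b hb =>
    cross y z a b (hD hy) (hD hz) hyz ((hS y hy).1 ha) ((hS z hz).1 hb)

theorem M2_union_indep (G : SimpleGraph V) (h4 : ¬ HasCycle G 4)
    (h5 : ¬ HasCycle G 5) (h6 : ¬ HasCycle G 6) (h7 : ¬ HasCycle G 7) (v : V) :
    (∀ y₁ y₂ a₁ a₂ : V, G.Adj v y₁ → G.Adj v y₂ → y₁ ≠ y₂ →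
        a₁ ∈ Nv G 2 y₁ ∩ Nv G 3 v → a₂ ∈ Nv G 2 y₂ ∩ Nv G 3 v → ¬ G.Adj a₁ a₂) ∧
    ∀ (D : Set V) (Sf : V → Set V), D ⊆ {y : V | G.Adj v y} →
      (∀ y ∈ D, Sf y ⊆ Nv G 2 y ∩ Nv G 3 v ∧ IsIndep G (Sf y)) →
      IsIndep G (⋃ y ∈ D, Sf y) :=
  M2_union_indep_general G h4 h7 v
end
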